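/- Suppose the image of m in K is zero (i.e., the characteristic of K divides m), n ≥ 1, and θ^n ≠ 1. Then every x ∈ K^m with (M_m)^n·x = x satisfies Σ_{i=1}^m x_i = 0. -/

import Mathlib

/-!
Every column of `M_m` sums to `θ`: column `m` contains `1` once and `1 - θ` in the other
`m - 1` rows, giving `θ + m (1 - θ) = θ` because `m = 0` in `K`; every other column contains a
single `θ`. Hence `∑ (M_m y)_i = θ ∑ y_i`, so a fixed vector `x` of `M_m^n` satisfies
`(θ^n - 1) ∑ x_i = 0`.
-/

namespace Matrix

variable {ι κ R : Type*} [Fintype ι] [Fintype κ]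

theorem sum_mulVec_of_sum_col_eq [CommSemiring R] {M : Matrix ι κ R} {c : R}
    (hM : ∀ j, ∑ i, M i j = c) (y : κ → R) : ∑ i, (M *ᵥ y) i = c * ∑ j, y j := by
  simp only [mulVec, dotProduct, Finset.mul_sum]
  rw [Finset.sum_comm]
  refine Finset.sum_congr rfl fun j _ => ?_
  rw [← Finset.sum_mul, hM j]

variable [DecidableEq ι]

theorem sum_pow_mulVec_of_sum_col_eq [CommSemiring R] {M : Matrix ι ι R} {c : R}
    (hM : ∀ j, ∑ i, M i j = c) (y : ι → R) (k : ℕ) :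
    ∑ i, (M ^ k *ᵥ y) i = c ^ k * ∑ i, y i := by
  induction k with
  | zero => simp
  | succ k ih =>
    rw [pow_succ', ← mulVec_mulVec, sum_mulVec_of_sum_col_eq hM, ih, pow_succ', mul_assoc]

theorem sum_eq_zero_of_pow_mulVec_eq_self [CommRing R] [NoZeroDivisors R] {M : Matrix ι ι R}
    {c : R} (hM : ∀ j, ∑ i, M i j = c) {n : ℕ} (hc : c ^ n ≠ 1) {x : ι → R}
    (hx : M ^ n *ᵥ x = x) : ∑ i, x i = 0 := by
  have hsum := sum_pow_mulVec_of_sum_col_eq hM x n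
  rw [hx] at hsum
  have : (c ^ n - 1) * ∑ i, x i = 0 := by linear_combination -hsum
  exact (mul_eq_zero.mp this).resolve_left (sub_ne_zero.mpr hc)

end Matrix

def thetaMatrix {R : Type*} [CommRing R] (θ : R) (m : ℕ) : Matrix (Fin m) (Fin m) R :=
  Matrix.of fun i j =>
    if (i : ℕ) = 0 then (if (j : ℕ) = m - 1 then 1 else 0)
    else if (j : ℕ) = (i : ℕ) - 1 then θ
    else if (j : ℕ) = m - 1 then 1 - θ else 0

theorem sum_col_thetaMatrix {R : Type*} [CommRing R] (θ : R) {m : ℕ} (hm : (m : R) = 0)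
    (j : Fin m) : ∑ i, thetaMatrix θ m i j = θ := by
  obtain _ | k := m
  · exact j.elim0
  have hrow : ∀ i : Fin k, thetaMatrix θ (k + 1) i.succ j =
      if (j : ℕ) = i then θ else if (j : ℕ) = k then 1 - θ else 0 := by
    intro i; simp [thetaMatrix]
  rw [Fin.sum_univ_succ, Finset.sum_congr rfl fun i _ => hrow i]
  induction j using Fin.lastCases with
  | last =>
    have hk : (k : R) = -1 := by push_cast at hm; linear_combination hm
    have hne (i : Fin k) : k ≠ i := i.isLt.ne'
    simp [thetaMatrix, hne, hk]
  | cast j =>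
    simp [thetaMatrix, j.isLt.ne, Fin.val_inj]

theorem stmt_9_general (K : Type*) [Field K] (θ : K) (m : ℕ)
    (hmK : (m : K) = 0) (n : ℕ) (hθn : θ ^ n ≠ 1)
    (M : Matrix (Fin m) (Fin m) K)
    (hM : ∀ i j : Fin m, M i j =
      if (i : ℕ) = 0 then (if (j : ℕ) = m - 1 then 1 else 0)
      else if (j : ℕ) = (i : ℕ) - 1 then θ
      else if (j : ℕ) = m - 1 then 1 - θ else 0)
    (x : Fin m → K) (hx : (M ^ n).mulVec x = x) :
    ∑ i, x i = 0 := by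
  obtain rfl : M = thetaMatrix θ m := Matrix.ext hM
  exact Matrix.sum_eq_zero_of_pow_mulVec_eq_self (sum_col_thetaMatrix θ hmK) hθn hx

/-- Suppose the image of `m` in `K` is zero, `n ≥ 1`, and `θ^n ≠ 1`. Then every `x ∈ K^m`
with `(M_m)^n·x = x` satisfies `Σ_{i=1}^m x_i = 0`. -/
theorem stmt_9 (K : Type*) [Field K] (θ : K) (m : ℕ) (hm : 1 ≤ m)
    (hmK : (m : K) = 0) (n : ℕ) (hn : 1 ≤ n) (hθn : θ ^ n ≠ 1)
    (M : Matrix (Fin m) (Fin m) K)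
    (hM : ∀ i j : Fin m, M i j =
      if (i : ℕ) = 0 then (if (j : ℕ) = m - 1 then 1 else 0)
      else if (j : ℕ) = (i : ℕ) - 1 then θ
      else if (j : ℕ) = m - 1 then 1 - θ else 0)
    (x : Fin m → K) (hx : (M ^ n).mulVec x = x) :
    ∑ i, x i = 0 :=
  stmt_9_general K θ m hmK n hθn M hM x hx
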